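/- arXiv:2003.12960 — 2 statements merged into one kernel-verified Lean document; each statement's English description precedes it below -/
import Mathlib

section
/- Let P = p_1 p_2 ⋯ p_s be an induced path in a graph G, and let u, v be vertices not on P with uv ∈ E(G), such that u has a neighbor p_a on P, v has a neighbor p_b on P with a < b, u has no neighbor p_j with j > a, v has no neighbor p_j with j < b, and b − a ≡ k (mod 2) with b − a + 3 ≥ k. If additionally u,v have no other relevant neighbors making the cycle non-induced (i.e., (u, p_a, p_{a+1}, …, p_b, v, u) is an induced cycle), then G has an induced cycle of length b − a + 3 ≥ k with b − a + 3 ≡ k (mod 2), and hence G has a pivot-minor isomorphic to C_k. -/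
open SimpleGraph

/-- The pivot toggle: pairs of vertices lying in different classes among
`N(u)∩N(v)`, `N(u)\N(v)\{v}`, `N(v)\N(u)\{u}`. -/
def pivotToggle {V : Type*} (G : SimpleGraph V) (u v a b : V) : Prop :=
  ((G.Adj u a ∧ G.Adj v a) ∧ (G.Adj u b ∧ ¬ G.Adj v b ∧ b ≠ v)) ∨
  ((G.Adj u a ∧ G.Adj v a) ∧ (G.Adj v b ∧ ¬ G.Adj u b ∧ b ≠ u)) ∨
  ((G.Adj u a ∧ ¬ G.Adj v a ∧ a ≠ v) ∧ (G.Adj v b ∧ ¬ G.Adj u b ∧ b ≠ u)) ∨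
  ((G.Adj u b ∧ G.Adj v b) ∧ (G.Adj u a ∧ ¬ G.Adj v a ∧ a ≠ v)) ∨
  ((G.Adj u b ∧ G.Adj v b) ∧ (G.Adj v a ∧ ¬ G.Adj u a ∧ a ≠ u)) ∨
  ((G.Adj u b ∧ ¬ G.Adj v b ∧ b ≠ v) ∧ (G.Adj v a ∧ ¬ G.Adj u a ∧ a ≠ u))

/-- The graph `G ∧ uv` obtained from `G` by pivoting the edge `uv`:
complement the adjacency between the three classes pairwise and swap `u` and `v`. -/
def pivot {V : Type*} (G : SimpleGraph V) (u v : V) : SimpleGraph V :=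
  letI := Classical.decEq V
  SimpleGraph.fromRel (fun x y =>
    (pivotToggle G u v (Equiv.swap u v x) (Equiv.swap u v y) ∧
      ¬ G.Adj (Equiv.swap u v x) (Equiv.swap u v y)) ∨
    (¬ pivotToggle G u v (Equiv.swap u v x) (Equiv.swap u v y) ∧
      G.Adj (Equiv.swap u v x) (Equiv.swap u v y)))

/-- One pivot step: `H` is obtained from `G` by pivoting an edge. -/
def PivotStep {V : Type*} (G H : SimpleGraph V) : Prop :=
  ∃ u v, G.Adj u v ∧ H = pivot G u v

/-- `H` is (isomorphic to) a pivot-minor of `G`: `H` can be obtained from `G` by a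
sequence of pivots and vertex deletions. -/
def IsPivotMinor {W V : Type*} (H : SimpleGraph W) (G : SimpleGraph V) : Prop :=
  ∃ G' : SimpleGraph V, Relation.ReflTransGen PivotStep G G' ∧
    ∃ S : Set V, Nonempty (H ≃g G'.induce S)

lemma pivotToggle_symm {V : Type*} {G : SimpleGraph V} {u v a b : V} :
    pivotToggle G u v a b ↔ pivotToggle G u v b a := by
  constructor <;> rintro (h|h|h|h|h|h)
  · exact Or.inr (Or.inr (Or.inr (Or.inl h)))
  · exact Or.inr (Or.inr (Or.inr (Or.inr (Or.inl h))))
  · exact Or.inr (Or.inr (Or.inr (Or.inr (Or.inr h))))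
  · exact Or.inl h
  · exact Or.inr (Or.inl h)
  · exact Or.inr (Or.inr (Or.inl h))
  · exact Or.inr (Or.inr (Or.inr (Or.inl h)))
  · exact Or.inr (Or.inr (Or.inr (Or.inr (Or.inl h))))
  · exact Or.inr (Or.inr (Or.inr (Or.inr (Or.inr h))))
  · exact Or.inl h
  · exact Or.inr (Or.inl h)
  · exact Or.inr (Or.inr (Or.inl h))

lemma pivot_adj_of_ne {V : Type*} {G : SimpleGraph V} {u v x y : V}
    (hxu : x ≠ u) (hxv : x ≠ v) (hyu : y ≠ u) (hyv : y ≠ v) :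
    (pivot G u v).Adj x y ↔ x ≠ y ∧
      ((pivotToggle G u v x y ∧ ¬ G.Adj x y) ∨ (¬ pivotToggle G u v x y ∧ G.Adj x y)) := by
  letI := Classical.decEq V
  unfold pivot
  rw [fromRel_adj]
  simp only [Equiv.swap_apply_of_ne_of_ne hxu hxv, Equiv.swap_apply_of_ne_of_ne hyu hyv]
  constructor
  · rintro ⟨hne, h | h⟩
    · exact ⟨hne, h⟩
    · refine ⟨hne, ?_⟩
      rw [pivotToggle_symm (a := y)] at h
      rcases h with ⟨t, h⟩ | ⟨t, h⟩
      · exact Or.inl ⟨t, fun h' => h h'.symm⟩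
      · exact Or.inr ⟨t, h.symm⟩
  · rintro ⟨hne, h⟩; exact ⟨hne, Or.inl h⟩

def IsIndCycleOn {V : Type*} (G : SimpleGraph V) (m : ℕ) (q : Fin m → V) : Prop :=
  Function.Injective q ∧ ∀ i j, G.Adj (q i) (q j) ↔ (cycleGraph m).Adj i j

lemma isoOfIndCycle {V : Type*} {G : SimpleGraph V} {m : ℕ} {q : Fin m → V}
    (hq : IsIndCycleOn G m q) :
    Nonempty (G.induce (Set.range q) ≃g cycleGraph m) := by
  obtain ⟨hinj, hadj⟩ := hq
  exact ⟨(SimpleGraph.Iso.symm ⟨Equiv.ofInjective q hinj, fun {i j} => hadj i j⟩ : _)⟩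

lemma cyc_adj' {n : ℕ} (i j : Fin (n+3)) :
    (cycleGraph (n+3)).Adj i j ↔ ((i:ℕ)+1 = j ∨ (j:ℕ)+1 = i ∨
      ((i:ℕ) = n+2 ∧ (j:ℕ) = 0) ∨ ((j:ℕ) = n+2 ∧ (i:ℕ) = 0)) := by
  have hi := i.isLt; have hj := j.isLt
  have hmod : (1 + (n+2)) % (n+3) = 0 := by
    have : 1 + (n+2) = n+3 := by omega
    rw [this, Nat.mod_self]
  rw [cycleGraph_adj (n := n+1)]
  simp only [sub_eq_iff_eq_add, Fin.ext_iff, Fin.val_add, Fin.val_one]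
  constructor
  · rintro (h | h)
    · rcases Nat.lt_or_ge (1+(j:ℕ)) (n+3) with hlt | hge
      · rw [Nat.mod_eq_of_lt hlt] at h; omega
      · have hj' : (j:ℕ) = n+2 := by omega
        rw [hj', hmod] at h; omega
    · rcases Nat.lt_or_ge (1+(i:ℕ)) (n+3) with hlt | hge
      · rw [Nat.mod_eq_of_lt hlt] at h; omega
      · have hi' : (i:ℕ) = n+2 := by omega
        rw [hi', hmod] at h; omega
  · rintro (h | h | ⟨h1, h2⟩ | ⟨h1, h2⟩)
    · right; rw [Nat.mod_eq_of_lt (by omega)]; omega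
    · left; rw [Nat.mod_eq_of_lt (by omega)]; omega
    · right; rw [h1, h2, hmod]
    · left; rw [h1, h2, hmod]


lemma reduce {V : Type*} (G : SimpleGraph V) (n : ℕ) (q : Fin (n+5) → V)
    (hq : IsIndCycleOn G (n+5) q) :
    ∃ u v : V, G.Adj u v ∧
      IsIndCycleOn (pivot G u v) (n+3) (fun i => q (Fin.castLE (by omega) i)) := by
  obtain ⟨hinj, hadj⟩ := hq
  have hle : n + 3 ≤ n + 5 := by omega
  refine ⟨q ⟨n+3, by omega⟩, q ⟨n+4, by omega⟩, ?_, ?_, ?_⟩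
  · rw [hadj, cyc_adj' (n := n+2)]
    left; simp
  · intro i j hij
    have h2 := hinj hij
    have h3 : ((Fin.castLE hle i : Fin (n+5)) : ℕ) = ((Fin.castLE hle j : Fin (n+5)) : ℕ) := by
      exact congrArg Fin.val h2
    simp only [Fin.coe_castLE] at h3
    exact Fin.ext h3
  · intro i j
    have hi := i.isLt; have hj := j.isLt
    have hne_u : ∀ t : Fin (n+3), q (Fin.castLE hle t) ≠ q ⟨n+3, by omega⟩ := by
      intro t h
      have h2 := congrArg Fin.val (hinj h)
      simp only [Fin.coe_castLE] at h2
      omega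
    have hne_v : ∀ t : Fin (n+3), q (Fin.castLE hle t) ≠ q ⟨n+4, by omega⟩ := by
      intro t h
      have h2 := congrArg Fin.val (hinj h)
      simp only [Fin.coe_castLE] at h2
      omega
    have hxinj : ∀ t t' : Fin (n+3),
        q (Fin.castLE hle t) = q (Fin.castLE hle t') ↔ (t:ℕ) = t' := by
      intro t t'
      constructor
      · intro h
        have h2 := congrArg Fin.val (hinj h)
        simpa only [Fin.coe_castLE] using h2
      · intro h; congr 1; exact Fin.ext (by simpa using h)
    have hux : ∀ t : Fin (n+3), G.Adj (q ⟨n+3, by omega⟩) (q (Fin.castLE hle t)) ↔ (t:ℕ) = n+2 := by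
      intro t
      have ht := t.isLt
      rw [hadj, cyc_adj' (n := n+2)]
      simp only [Fin.coe_castLE, true_and, and_true]
      omega
    have hvx : ∀ t : Fin (n+3), G.Adj (q ⟨n+4, by omega⟩) (q (Fin.castLE hle t)) ↔ (t:ℕ) = 0 := by
      intro t
      have ht := t.isLt
      rw [hadj, cyc_adj' (n := n+2)]
      simp only [Fin.coe_castLE, true_and, and_true]
      omega
    have hxx : ∀ t t' : Fin (n+3), G.Adj (q (Fin.castLE hle t)) (q (Fin.castLE hle t')) ↔
        ((t:ℕ)+1 = t' ∨ (t':ℕ)+1 = t) := by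
      intro t t'
      have ht := t.isLt; have ht2 := t'.isLt
      rw [hadj, cyc_adj' (n := n+2)]
      simp only [Fin.coe_castLE, true_and, and_true]
      omega
    rw [pivot_adj_of_ne (hne_u i) (hne_v i) (hne_u j) (hne_v j), cyc_adj']
    unfold pivotToggle
    simp only [hux i, hux j, hvx i, hvx j, hxx i j, hxx j i,
      (G.adj_comm _ _ : G.Adj (q (Fin.castLE hle i)) (q ⟨n+3, by omega⟩) ↔ _)]
    simp only [ne_eq, hxinj i j, iff_true_intro (hne_u i), iff_true_intro (hne_u j),
      iff_true_intro (hne_v i), iff_true_intro (hne_v j), and_true, true_and]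
    omega

lemma cycle_pivotMinor (k : ℕ) (hk : 3 ≤ k) :
    ∀ m : ℕ, ∀ {V : Type*} (G : SimpleGraph V) (q : Fin m → V),
      k ≤ m → m % 2 = k % 2 → IsIndCycleOn G m q → IsPivotMinor (cycleGraph k) G := by
  intro m
  induction m using Nat.strong_induction_on with
  | _ m ih =>
    intro V G q hkm hpar hq
    rcases eq_or_lt_of_le hkm with rfl | hlt
    · exact ⟨G, Relation.ReflTransGen.refl, Set.range q, ((isoOfIndCycle hq).map Iso.symm : _)⟩
    · have hm5 : 5 ≤ m := by omega
      obtain ⟨n, rfl⟩ : ∃ n, m = n + 5 := ⟨m - 5, by omega⟩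
      obtain ⟨u, v, huv, hq2⟩ := reduce G n q hq
      obtain ⟨G2, hsteps, S, hiso⟩ :=
        ih (n+3) (by omega) (pivot G u v) _ (by omega) (by omega) hq2
      exact ⟨G2, Relation.ReflTransGen.head ⟨u, v, huv, rfl⟩ hsteps, S, hiso⟩

/-- If `P = p₁⋯p_s` is an induced path in `G`, and `u, v ∉ P` are adjacent vertices
such that `u` is adjacent to `p_a` but to no later path vertex, and `v` is adjacent
to `p_b` (`a < b`) but to no earlier path vertex, with `b − a + 3 ≥ k` of the same
parity as `k`, then `(u, p_a, …, p_b, v, u)` is an induced cycle of `G` of length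
`b − a + 3`, and hence `G` has a pivot-minor isomorphic to `C_k`. -/
theorem stmt_15 {V : Type*} (G : SimpleGraph V) (k s : ℕ) (hk : 3 ≤ k)
    (p : Fin s → V) (hinj : Function.Injective p)
    (hpath : ∀ i j : Fin s, G.Adj (p i) (p j) ↔ ((i : ℕ) + 1 = j ∨ (j : ℕ) + 1 = i))
    (u v : V) (hu : ∀ i, u ≠ p i) (hv : ∀ i, v ≠ p i) (huv : G.Adj u v)
    (a b : Fin s) (hab : a < b)
    (hua : G.Adj u (p a)) (hvb : G.Adj v (p b))
    (hu' : ∀ j : Fin s, a < j → ¬ G.Adj u (p j))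
    (hv' : ∀ j : Fin s, j < b → ¬ G.Adj v (p j))
    (hlen : k ≤ (b : ℕ) - a + 3) (hpar : ((b : ℕ) - a + 3) % 2 = k % 2) :
    (∃ S : Set V, Nonempty (G.induce S ≃g cycleGraph ((b : ℕ) - a + 3))) ∧
      IsPivotMinor (cycleGraph k) G := by
  have hab' : (a : ℕ) < (b : ℕ) := hab
  have hbs := b.isLt
  have F1 : ∀ (t : ℕ) (ht : t < s), (a:ℕ) ≤ t → (G.Adj u (p ⟨t, ht⟩) ↔ t = (a:ℕ)) := by
    intro t ht hta
    constructor
    · intro h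
      by_contra hne
      exact hu' ⟨t, ht⟩ (by rw [Fin.lt_def]; show (a:ℕ) < t; omega) h
    · intro h
      rw [show (⟨t, ht⟩ : Fin s) = a from Fin.ext h]
      exact hua
  have F2 : ∀ (t : ℕ) (ht : t < s), t ≤ (b:ℕ) → (G.Adj v (p ⟨t, ht⟩) ↔ t = (b:ℕ)) := by
    intro t ht htb
    constructor
    · intro h
      by_contra hne
      exact hv' ⟨t, ht⟩ (by rw [Fin.lt_def]; show t < (b:ℕ); omega) h
    · intro h
      rw [show (⟨t, ht⟩ : Fin s) = b from Fin.ext h]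
      exact hvb
  have F3 : ∀ (t : ℕ) (ht : t < s) (t2 : ℕ) (ht2 : t2 < s),
      G.Adj (p ⟨t, ht⟩) (p ⟨t2, ht2⟩) ↔ (t + 1 = t2 ∨ t2 + 1 = t) := fun t ht t2 ht2 =>
    hpath ⟨t, ht⟩ ⟨t2, ht2⟩
  have key : IsIndCycleOn G ((b : ℕ) - a + 3) (fun i =>
      if (i:ℕ) = 0 then u else if (i:ℕ) = (b : ℕ) - a + 2 then v
      else p ⟨min ((a:ℕ) + (i:ℕ) - 1) (b:ℕ), by omega⟩) := by
    constructor
    · intro i j h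
      have hi := i.isLt; have hj := j.isLt
      have hd2 : ¬((b:ℕ) - (a:ℕ) + 2 = 0) := by omega
      have hd2' : ¬((0:ℕ) = (b:ℕ) - (a:ℕ) + 2) := by omega
      by_cases hi0 : (i:ℕ) = 0 <;> by_cases hid : (i:ℕ) = (b:ℕ) - (a:ℕ) + 2 <;>
        by_cases hj0 : (j:ℕ) = 0 <;> by_cases hjd : (j:ℕ) = (b:ℕ) - (a:ℕ) + 2 <;>
        simp only [hi0, hid, hj0, hjd, if_true, if_false, ite_true, ite_false,
          if_pos, if_neg, not_false_iff, hd2, hd2'] at h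
      all_goals first
        | exact Fin.ext (by omega)
        | exact absurd h huv.ne
        | exact absurd h huv.ne.symm
        | exact absurd h (hu _)
        | exact absurd h (hv _)
        | exact absurd h.symm (hu _)
        | exact absurd h.symm (hv _)
        | · have h5 := hinj h
            rw [Fin.mk.injEq] at h5
            exact Fin.ext (by omega)
    · intro i j
      have hi := i.isLt; have hj := j.isLt
      have hd2 : ¬((b:ℕ) - (a:ℕ) + 2 = 0) := by omega
      have hd2' : ¬((0:ℕ) = (b:ℕ) - (a:ℕ) + 2) := by omega
      rw [cyc_adj']
      by_cases hi0 : (i:ℕ) = 0 <;> by_cases hid : (i:ℕ) = (b:ℕ) - (a:ℕ) + 2 <;>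
        by_cases hj0 : (j:ℕ) = 0 <;> by_cases hjd : (j:ℕ) = (b:ℕ) - (a:ℕ) + 2 <;>
        simp only [hi0, hid, hj0, hjd, if_true, if_false, ite_true, ite_false,
          if_pos, if_neg, not_false_iff, hd2, hd2', and_true, true_and, and_false,
          false_and, or_false, false_or, or_true, true_or]
      all_goals first
        | (exfalso; omega)
        | exact iff_of_true huv trivial
        | exact iff_of_true huv.symm trivial
        | exact iff_of_false G.irrefl (by omega)
        | exact iff_of_true huv (by omega)
        | exact iff_of_true huv.symm (by omega)
        | exact (F1 _ _ (by omega)).trans (by omega)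
        | exact ((G.adj_comm _ _).trans (F1 _ _ (by omega))).trans (by omega)
        | exact (F2 _ _ (by omega)).trans (by omega)
        | exact ((G.adj_comm _ _).trans (F2 _ _ (by omega))).trans (by omega)
        | exact (F3 _ _ _ _).trans (by omega)
  exact ⟨⟨Set.range _, isoOfIndCycle key⟩,
    cycle_pivotMinor k hk _ G _ hlen hpar key⟩
end

section
/- For every integer k ≥ 3, if a graph G contains an induced cycle C of length at least k+1 together with a vertex z outside C adjacent to exactly two adjacent vertices of C, then G has a pivot-minor isomorphic to a cycle of length |V(C)| − 1; in particular, a graph containing an induced cycle of length ≥ k+1 of parity opposite to k plus such a pendant-triangle vertex has a pivot-minor isomorphic to C_k. -/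
open SimpleGraph

section Aux
variable {V : Type*}
lemma pivotToggle_comm (G : SimpleGraph V) (u v a b : V) :
    pivotToggle G u v b a ↔ pivotToggle G u v a b := by
  unfold pivotToggle
  constructor
  all_goals rintro (h|h|h|h|h|h)
  exacts [Or.inr (Or.inr (Or.inr (Or.inl h))),
    Or.inr (Or.inr (Or.inr (Or.inr (Or.inl h)))),
    Or.inr (Or.inr (Or.inr (Or.inr (Or.inr h)))),
    Or.inl h, Or.inr (Or.inl h), Or.inr (Or.inr (Or.inl h)),
    Or.inr (Or.inr (Or.inr (Or.inl h))),
    Or.inr (Or.inr (Or.inr (Or.inr (Or.inl h)))),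
    Or.inr (Or.inr (Or.inr (Or.inr (Or.inr h)))),
    Or.inl h, Or.inr (Or.inl h), Or.inr (Or.inr (Or.inl h))]

lemma pivot_adj_of_ne_s19 (G : SimpleGraph V) (u v a b : V)
    (hau : a ≠ u) (hav : a ≠ v) (hbu : b ≠ u) (hbv : b ≠ v) :
    (pivot G u v).Adj a b ↔
      a ≠ b ∧ ((pivotToggle G u v a b ∧ ¬ G.Adj a b) ∨
               (¬ pivotToggle G u v a b ∧ G.Adj a b)) := by
  letI := Classical.decEq V
  unfold pivot
  rw [fromRel_adj]
  simp only [Equiv.swap_apply_of_ne_of_ne hau hav, Equiv.swap_apply_of_ne_of_ne hbu hbv,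
    pivotToggle_comm, G.adj_comm b a, or_self]


lemma cycleGraph_adj_val {n : ℕ} (hn : 2 ≤ n) (i j : Fin n) :
    (cycleGraph n).Adj i j ↔
      (i.val + 1 = j.val ∨ j.val + 1 = i.val ∨
       (i.val = 0 ∧ j.val + 1 = n) ∨ (j.val = 0 ∧ i.val + 1 = n)) := by
  have hi := i.isLt; have hj := j.isLt
  rw [cycleGraph_adj', Fin.sub_def, Fin.sub_def]
  simp only [Fin.val_mk]
  have h1 : (n - j.val + i.val) % n = if n - j.val + i.val < n then n - j.val + i.val else n - j.val + i.val - n := by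
    split
    · exact Nat.mod_eq_of_lt ‹_›
    · rw [Nat.mod_eq_sub_mod (by omega), Nat.mod_eq_of_lt (by omega)]
  have h2 : (n - i.val + j.val) % n = if n - i.val + j.val < n then n - i.val + j.val else n - i.val + j.val - n := by
    split
    · exact Nat.mod_eq_of_lt ‹_›
    · rw [Nat.mod_eq_sub_mod (by omega), Nat.mod_eq_of_lt (by omega)]
  rw [h1, h2]
  split <;> split <;> omega

variable {V : Type*}

def IsIndCycle (G : SimpleGraph V) (n : ℕ) (f : Fin n → V) : Prop :=
  Function.Injective f ∧ ∀ i j, G.Adj (f i) (f j) ↔ (cycleGraph n).Adj i j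

lemma IsIndCycle.iso {G : SimpleGraph V} {n : ℕ} {f : Fin n → V} (h : IsIndCycle G n f) :
    Nonempty (cycleGraph n ≃g G.induce (Set.range f)) := by
  refine ⟨⟨Equiv.ofInjective f h.1, ?_⟩⟩
  intro i j
  simp only [Equiv.ofInjective_apply, comap_adj, Function.Embedding.coe_subtype]
  exact h.2 i j

def rotIso (n : ℕ) [NeZero n] (c : Fin n) : cycleGraph n ≃g cycleGraph n where
  toEquiv := Equiv.addRight c
  map_rel_iff' := by
    intro a b
    simp only [Equiv.coe_addRight, cycleGraph_adj', add_sub_add_right_eq_sub]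

def negIso (n : ℕ) [NeZero n] : cycleGraph n ≃g cycleGraph n where
  toEquiv := Equiv.neg (Fin n)
  map_rel_iff' := by
    intro a b
    simp only [Equiv.neg_apply, cycleGraph_adj', neg_sub_neg]
    exact or_comm

lemma extract {G : SimpleGraph V} {S : Set V} {n : ℕ} (hn : 4 ≤ n)
    (e : G.induce S ≃g cycleGraph n) {x y : V} (hx : x ∈ S) (hy : y ∈ S)
    (hxy : G.Adj x y) :
    ∃ f : Fin n → V, IsIndCycle G n f ∧ (∀ i, f i ∈ S) ∧
      f ⟨0, by omega⟩ = y ∧ f ⟨1, by omega⟩ = x := by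
  haveI : NeZero n := ⟨by omega⟩
  set a := e ⟨y, hy⟩ with ha
  let E₁ : cycleGraph n ≃g G.induce S := (rotIso n a).trans e.symm
  have hE10 : E₁ ⟨0, by omega⟩ = ⟨y, hy⟩ := by
    show e.symm ((Equiv.addRight a) ⟨0, by omega⟩) = ⟨y, hy⟩
    have : (Equiv.addRight a) ⟨0, by omega⟩ = a := by
      simp [Equiv.coe_addRight]
    rw [this, ha]
    exact e.symm_apply_apply _
  set d := E₁.symm ⟨x, hx⟩ with hd
  have hadjd : (cycleGraph n).Adj d (E₁.symm ⟨y, hy⟩) := by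
    rw [E₁.symm.map_adj_iff]
    simp only [comap_adj, Function.Embedding.coe_subtype]
    exact hxy
  have hy0 : E₁.symm ⟨y, hy⟩ = ⟨0, by omega⟩ := by
    rw [← hE10]; exact E₁.symm_apply_apply _
  rw [hy0] at hadjd
  rw [cycleGraph_adj_val (by omega)] at hadjd
  simp only [Fin.val_mk] at hadjd
  have hdval : d.val = 1 ∨ d.val + 1 = n := by omega
  rcases hdval with hdv | hdv
  · refine ⟨fun i => (E₁ i).val, ⟨?_, ?_⟩, fun i => (E₁ i).2, by show (E₁ ⟨0, by omega⟩ : V) = y; rw [hE10], ?_⟩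
    · exact fun i j h => E₁.toEquiv.injective (Subtype.coe_injective h)
    · intro i j
      rw [← E₁.map_adj_iff]
      simp only [comap_adj, Function.Embedding.coe_subtype]
    · show (E₁ ⟨1, by omega⟩ : V) = x
      have h1d : (⟨1, by omega⟩ : Fin n) = d := Fin.ext (by simp [hdv])
      rw [h1d, hd, E₁.apply_symm_apply]
  · let E₂ : cycleGraph n ≃g G.induce S := (negIso n).trans E₁
    have h20 : E₂ ⟨0, by omega⟩ = ⟨y, hy⟩ := by
      show E₁ ((Equiv.neg (Fin n)) ⟨0, by omega⟩) = ⟨y, hy⟩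
      have : (Equiv.neg (Fin n)) ⟨0, by omega⟩ = ⟨0, by omega⟩ := by
        simp only [Equiv.neg_apply]
        exact Fin.ext (by simp [Fin.neg_def])
      rw [this, hE10]
    refine ⟨fun i => (E₂ i).val, ⟨?_, ?_⟩, fun i => (E₂ i).2, by show (E₂ ⟨0, by omega⟩ : V) = y; rw [h20], ?_⟩
    · exact fun i j h => E₂.toEquiv.injective (Subtype.coe_injective h)
    · intro i j
      rw [← E₂.map_adj_iff]
      simp only [comap_adj, Function.Embedding.coe_subtype]
    · show (E₁ ((Equiv.neg (Fin n)) ⟨1, by omega⟩) : V) = x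
      have : (Equiv.neg (Fin n)) ⟨1, by omega⟩ = d := by
        simp only [Equiv.neg_apply]
        refine Fin.ext ?_
        rw [Fin.neg_def]
        simp
        omega
      rw [this, hd, E₁.apply_symm_apply]

lemma shift_cycle {n c : ℕ} (hc : 1 ≤ c) (hcn : c + 3 ≤ n)
    {f : Fin n → V} (hinj : Function.Injective f) (H : SimpleGraph V)
    (hadj : ∀ i j : Fin n, c ≤ i.val → c ≤ j.val →
      (H.Adj (f i) (f j) ↔ ((cycleGraph n).Adj i j ∨
        (i.val = c ∧ j.val + 1 = n) ∨ (j.val = c ∧ i.val + 1 = n)))) :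
    ∃ g : Fin (n - c) → V, IsIndCycle H (n - c) g := by
  refine ⟨fun i => f ⟨i.val + c, by omega⟩, ?_, ?_⟩
  · intro i j h
    have h2 := congrArg Fin.val (hinj h)
    simp only [Fin.val_mk] at h2
    exact Fin.ext (by omega)
  · intro i j
    have hi := i.isLt; have hj := j.isLt
    show H.Adj (f ⟨i.val + c, by omega⟩) (f ⟨j.val + c, by omega⟩) ↔ _
    rw [hadj _ _ (Nat.le_add_left c i.val) (Nat.le_add_left c j.val),
      cycleGraph_adj_val (by omega), cycleGraph_adj_val (by omega)]
    simp only [Fin.val_mk, true_and, and_true, false_and, and_false]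
    omega

lemma pivot1 {G : SimpleGraph V} {n : ℕ} (hn : 4 ≤ n) {f : Fin n → V}
    (hf : IsIndCycle G n f) {z : V} (hzf : ∀ i, f i ≠ z)
    (hz : ∀ i : Fin n, G.Adj z (f i) ↔ (f i = f ⟨1, by omega⟩ ∨ f i = f ⟨0, by omega⟩)) :
    ∃ H, PivotStep G H ∧ ∃ g : Fin (n - 1) → V, IsIndCycle H (n - 1) g := by
  obtain ⟨hinj, hadj⟩ := hf
  have hval : ∀ p q : Fin n, f p = f q ↔ p.val = q.val := fun p q =>
    ⟨fun h => congrArg Fin.val (hinj h), fun h => congrArg f (Fin.ext h)⟩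
  have hz0 : G.Adj z (f ⟨0, by omega⟩) := (hz _).mpr (Or.inr rfl)
  refine ⟨pivot G z (f ⟨0, by omega⟩), ⟨z, _, hz0, rfl⟩, ?_⟩
  apply shift_cycle le_rfl (by omega) hinj
  intro i j hi hj
  have hi' := i.isLt; have hj' := j.isLt
  have eZ : ∀ p : Fin n, G.Adj z (f p) ↔ (p.val = 1 ∨ p.val = 0) := by
    intro p
    rw [hz p, hval, hval]
  have eY : ∀ p : Fin n, G.Adj (f ⟨0, by omega⟩) (f p) ↔ (p.val = 1 ∨ p.val + 1 = n) := by
    intro p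
    have hp := p.isLt
    rw [hadj, cycleGraph_adj_val (by omega)]
    simp only [Fin.val_mk, true_and, and_true, false_and, and_false]
    omega
  have hnei : f i ≠ f ⟨0, by omega⟩ := by
    intro h; rw [hval] at h; simp only [Fin.val_mk] at h; omega
  have hnej : f j ≠ f ⟨0, by omega⟩ := by
    intro h; rw [hval] at h; simp only [Fin.val_mk] at h; omega
  rw [pivot_adj_of_ne_s19 G z (f ⟨0, by omega⟩) (f i) (f j) (hzf i) hnei (hzf j) hnej]
  have htog : pivotToggle G z (f ⟨0, by omega⟩) (f i) (f j) ↔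
      ((i.val = 1 ∧ j.val + 1 = n) ∨ (j.val = 1 ∧ i.val + 1 = n)) := by
    simp only [pivotToggle, eZ, eY, ne_eq, hnei, hnej, hzf i, hzf j,
      not_false_eq_true, and_true]
    omega
  rw [htog, hadj i j, cycleGraph_adj_val (by omega)]
  have hne' : f i ≠ f j ↔ ¬ i.val = j.val := by rw [ne_eq, hval]
  rw [hne']
  omega

lemma pivot2 {G : SimpleGraph V} {n : ℕ} (hn : 5 ≤ n) {f : Fin n → V}
    (hf : IsIndCycle G n f) :
    ∃ H, PivotStep G H ∧ ∃ g : Fin (n - 2) → V, IsIndCycle H (n - 2) g := by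
  obtain ⟨hinj, hadj⟩ := hf
  have hval : ∀ p q : Fin n, f p = f q ↔ p.val = q.val := fun p q =>
    ⟨fun h => congrArg Fin.val (hinj h), fun h => congrArg f (Fin.ext h)⟩
  have h01 : G.Adj (f ⟨0, by omega⟩) (f ⟨1, by omega⟩) := by
    rw [hadj, cycleGraph_adj_val (by omega)]
    simp
  refine ⟨pivot G (f ⟨0, by omega⟩) (f ⟨1, by omega⟩), ⟨_, _, h01, rfl⟩, ?_⟩
  apply shift_cycle (by omega : 1 ≤ 2) (by omega) hinj
  intro i j hi hj
  have hi' := i.isLt; have hj' := j.isLt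
  have e0 : ∀ p : Fin n, G.Adj (f ⟨0, by omega⟩) (f p) ↔ (p.val = 1 ∨ p.val + 1 = n) := by
    intro p
    have hp := p.isLt
    rw [hadj, cycleGraph_adj_val (by omega)]
    simp only [Fin.val_mk, true_and, and_true, false_and, and_false]
    omega
  have e1 : ∀ p : Fin n, G.Adj (f ⟨1, by omega⟩) (f p) ↔ (p.val = 2 ∨ p.val = 0) := by
    intro p
    have hp := p.isLt
    rw [hadj, cycleGraph_adj_val (by omega)]
    simp only [Fin.val_mk, true_and, and_true, false_and, and_false]
    omega
  have hne : ∀ (p : Fin n) (m : ℕ) (hm : m < n), p.val ≠ m → f p ≠ f ⟨m, hm⟩ := by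
    intro p m hm h hEq
    rw [hval] at hEq
    simp only [Fin.val_mk] at hEq
    exact h hEq
  rw [pivot_adj_of_ne_s19 G (f ⟨0, by omega⟩) (f ⟨1, by omega⟩) (f i) (f j)
    (hne i 0 (by omega) (by omega)) (hne i 1 (by omega) (by omega))
    (hne j 0 (by omega) (by omega)) (hne j 1 (by omega) (by omega))]
  have htog : pivotToggle G (f ⟨0, by omega⟩) (f ⟨1, by omega⟩) (f i) (f j) ↔
      ((i.val = 2 ∧ j.val + 1 = n) ∨ (j.val = 2 ∧ i.val + 1 = n)) := by
    simp only [pivotToggle, e0, e1, ne_eq, hne i 0 (by omega) (by omega),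
      hne i 1 (by omega) (by omega), hne j 0 (by omega) (by omega),
      hne j 1 (by omega) (by omega), not_false_eq_true, and_true]
    omega
  rw [htog, hadj i j, cycleGraph_adj_val (by omega)]
  have hne' : f i ≠ f j ↔ ¬ i.val = j.val := by rw [ne_eq, hval]
  rw [hne']
  omega

lemma descend (d : ℕ) : ∀ (G : SimpleGraph V) (k : ℕ), 3 ≤ k →
    (∃ f : Fin (k + 2 * d) → V, IsIndCycle G (k + 2 * d) f) →
    ∃ G', Relation.ReflTransGen PivotStep G G' ∧ ∃ g : Fin k → V, IsIndCycle G' k g := by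
  induction d with
  | zero =>
    rintro G k hk ⟨f, hf⟩
    exact ⟨G, Relation.ReflTransGen.refl, f, hf⟩
  | succ d ih =>
    rintro G k hk ⟨f, hf⟩
    obtain ⟨H, hstep, g, hg⟩ := pivot2 (by omega) hf
    have hE : k + 2 * (d + 1) - 2 = k + 2 * d := by omega
    have hH : ∃ f : Fin (k + 2 * d) → V, IsIndCycle H (k + 2 * d) f := by
      rw [← hE]; exact ⟨g, hg⟩
    obtain ⟨G', hreach, g', hg'⟩ := ih H k hk hH
    exact ⟨G', Relation.ReflTransGen.head hstep hreach, g', hg'⟩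

end Aux

/-- If `G` contains an induced cycle `C` of length `ℓ ≥ k+1` together with a vertex
`z` outside `C` adjacent to exactly two adjacent vertices of `C`, then `G` has a
pivot-minor isomorphic to the cycle of length `ℓ − 1 = |V(C)| − 1`; in particular,
if moreover `ℓ` has parity opposite to `k`, then `G` has a pivot-minor isomorphic
to `C_k`. -/
theorem stmt_19 {V : Type*} (G : SimpleGraph V) (k ℓ : ℕ) (hk : 3 ≤ k)
    (hℓ : k + 1 ≤ ℓ) (S : Set V) (x y z : V)
    (hx : x ∈ S) (hy : y ∈ S) (hz : z ∉ S)
    (hC : Nonempty (G.induce S ≃g cycleGraph ℓ))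
    (hxy : G.Adj x y)
    (hNz : ∀ w ∈ S, (G.Adj z w ↔ (w = x ∨ w = y))) :
    IsPivotMinor (cycleGraph (ℓ - 1)) G ∧
      (ℓ % 2 ≠ k % 2 → IsPivotMinor (cycleGraph k) G) := by
  have hn4 : 4 ≤ ℓ := by omega
  obtain ⟨e⟩ := hC
  obtain ⟨f, hf, hmem, hf0, hf1⟩ := extract hn4 e hx hy hxy
  have hzf : ∀ i, f i ≠ z := fun i h => hz (h ▸ hmem i)
  have hzadj : ∀ i : Fin ℓ, G.Adj z (f i) ↔ (f i = f ⟨1, by omega⟩ ∨ f i = f ⟨0, by omega⟩) := by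
    intro i
    rw [hNz (f i) (hmem i), hf0, hf1]
  obtain ⟨H, hstep, g, hg⟩ := pivot1 hn4 hf hzf hzadj
  constructor
  · exact ⟨H, Relation.ReflTransGen.single hstep, Set.range g, hg.iso⟩
  · intro hpar
    obtain ⟨dd, hdd⟩ : ∃ dd, ℓ - 1 = k + 2 * dd := ⟨(ℓ - 1 - k) / 2, by omega⟩
    have hH : ∃ g' : Fin (k + 2 * dd) → V, IsIndCycle H (k + 2 * dd) g' := by
      rw [← hdd]; exact ⟨g, hg⟩
    obtain ⟨G', hreach, g', hg'⟩ := descend dd H k hk hH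
    exact ⟨G', Relation.ReflTransGen.head hstep hreach, Set.range g', hg'.iso⟩
end
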